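/- Let S = K[x_1,x_2,x_3,x_4]. Then sdepth((x_1,x_2) ∩ (x_3,x_4)) = 3; in particular (x_1,x_2) ∩ (x_3,x_4) = x_1x_3K[x_1,x_3,x_4] ⊕ x_1x_4K[x_1,x_2,x_4] ⊕ x_2x_3K[x_1,x_2,x_3] ⊕ x_2x_4K[x_2,x_3,x_4] ⊕ x_1x_2x_3x_4K[x_1,x_2,x_3,x_4] is a Stanley decomposition. -/

import Mathlib

/-!
The Stanley space `x^e K[Z]` is spanned by the monomials `x^c` with `e ≤ c` and `c i = e i`
for `i ∉ Z`, so a Stanley decomposition of a monomial ideal is a partition of its set of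
exponents into such pieces. The five pieces of the statement partition the exponents of
`(x₁, x₂) ∩ (x₃, x₄)`, whence `sdepth ≥ 3`. Conversely, a piece with `Z` all of the variables
is the upper set above `e`, and any two upper sets of `ℕ⁴` meet; since the pieces are
disjoint, a decomposition made only of such pieces puts `x₁x₃` and `x₂x₄` into the same
piece, whose generator then divides their gcd `1`, which is not in the ideal.
-/

open MvPolynomial

variable {K : Type*} [Field K]

/-- The Stanley space `u·K[Z]`: the `K`-linear span of all `u * v` where `v` is a
monomial in the variables of `Z`. -/
noncomputable def stanleySpace {n : ℕ} (u : MvPolynomial (Fin n) K) (Z : Finset (Fin n)) :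
    Submodule K (MvPolynomial (Fin n) K) :=
  Submodule.span K { w | ∃ d : Fin n →₀ ℕ, ↑d.support ⊆ (Z : Set (Fin n)) ∧
    w = u * MvPolynomial.monomial d 1 }

/-- `u` is a monomial. -/
def IsMonomial {n : ℕ} (u : MvPolynomial (Fin n) K) : Prop :=
  ∃ d : Fin n →₀ ℕ, u = MvPolynomial.monomial d 1

/-- A monomial ideal: an ideal generated by monomials. -/
def IsMonomialIdeal {n : ℕ} (I : Ideal (MvPolynomial (Fin n) K)) : Prop :=
  ∃ G : Set (MvPolynomial (Fin n) K), (∀ u ∈ G, IsMonomial u) ∧ I = Ideal.span G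

/-- `(u i, Z i)` is a Stanley decomposition of the ideal `I`:
`I = ⊕ᵢ uᵢ K[Zᵢ]` as `K`-vector spaces, with each `uᵢ` a monomial. -/
def IsStanleyDecomp {n : ℕ} (I : Ideal (MvPolynomial (Fin n) K)) {s : ℕ}
    (u : Fin s → MvPolynomial (Fin n) K) (Z : Fin s → Finset (Fin n)) : Prop :=
  (∀ i, IsMonomial (u i)) ∧
  iSupIndep (fun i => stanleySpace (u i) (Z i)) ∧
  (⨆ i, stanleySpace (u i) (Z i)) = Submodule.restrictScalars K I

/-- The Stanley depth of a monomial ideal: the largest `k` such that there is a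
Stanley decomposition all of whose Stanley spaces have dimension at least `k`. -/
noncomputable def sdepth {n : ℕ} (I : Ideal (MvPolynomial (Fin n) K)) : ℕ :=
  sSup { k | ∃ (s : ℕ) (u : Fin s → MvPolynomial (Fin n) K) (Z : Fin s → Finset (Fin n)),
    IsStanleyDecomp I u Z ∧ ∀ i, k ≤ (Z i).card }

section MonomialSubmodules

variable {σ R : Type*} [CommSemiring R]

theorem restrictSupport_inter (s t : Set (σ →₀ ℕ)) :
    restrictSupport R (s ∩ t) = restrictSupport R s ⊓ restrictSupport R t := by
  ext p
  simp only [Submodule.mem_inf, mem_restrictSupport_iff, Set.subset_inter_iff]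

theorem iSup_restrictSupport {ι : Sort*} (s : ι → Set (σ →₀ ℕ)) :
    ⨆ i, restrictSupport R (s i) = restrictSupport R (⋃ i, s i) := by
  simp only [restrictSupport_eq_span, Set.image_iUnion, Submodule.span_iUnion]

theorem disjoint_restrictSupport {s t : Set (σ →₀ ℕ)} (h : Disjoint s t) :
    Disjoint (restrictSupport R s) (restrictSupport R t) := by
  refine Submodule.disjoint_def.mpr fun p hs ht => ?_
  rw [← support_eq_empty, ← Finset.coe_eq_empty]
  exact Set.subset_empty_iff.mp (h.inter_eq ▸ Set.subset_inter hs ht)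

theorem disjoint_of_disjoint_restrictSupport [Nontrivial R] {s t : Set (σ →₀ ℕ)}
    (h : Disjoint (restrictSupport R s) (restrictSupport R t)) : Disjoint s t := by
  refine Set.disjoint_left.mpr fun c hs ht => ?_
  have := Submodule.disjoint_def.mp h (monomial c (1 : R)) (by simp [hs]) (by simp [ht])
  simp at this

open Function in
theorem iSupIndep_restrictSupport {ι : Type*} {s : ι → Set (σ →₀ ℕ)}
    (hs : Pairwise (Disjoint on s)) : iSupIndep fun i => restrictSupport R (s i) := by
  intro i
  have hsi : Disjoint (s i) (⋃ j, ⋃ _ : j ≠ i, s j) := by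
    simpa only [Set.iSup_eq_iUnion] using iSupIndep_iff_pairwiseDisjoint.mpr hs i
  simpa only [iSup_restrictSupport] using disjoint_restrictSupport (R := R) hsi

theorem restrictScalars_span_image_X (s : Set σ) :
    (Ideal.span (X '' s : Set (MvPolynomial σ R))).restrictScalars R =
      restrictSupport R {c | ∃ i ∈ s, 0 < c i} := by
  ext p
  have hX : (X '' s : Set (MvPolynomial σ R)) =
      (monomial · 1) '' ((Finsupp.single · 1) '' s) := by
    rw [Set.image_image]; rfl
  simp only [Submodule.restrictScalars_mem, hX, mem_ideal_span_monomial_image,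
    mem_restrictSupport_iff, Set.subset_def, Finset.mem_coe, Set.exists_mem_image,
    Finsupp.single_le_iff, Set.mem_ofPred_eq, Nat.one_le_iff_ne_zero, Nat.pos_iff_ne_zero]

end MonomialSubmodules

def stanleyExponents {n : ℕ} (e : Fin n →₀ ℕ) (Z : Finset (Fin n)) : Set (Fin n →₀ ℕ) :=
  {c | e ≤ c ∧ ∀ i ∉ Z, c i = e i}

theorem mem_stanleyExponents_iff {n : ℕ} {e c : Fin n →₀ ℕ} {Z : Finset (Fin n)} :
    c ∈ stanleyExponents e Z ↔ ∀ i, e i ≤ c i ∧ (i ∉ Z → c i = e i) := by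
  simp only [stanleyExponents, Set.mem_ofPred_eq, Finsupp.le_def, forall_and]

theorem stanleySpace_monomial {n : ℕ} (e : Fin n →₀ ℕ) (Z : Finset (Fin n)) :
    stanleySpace (monomial e (1 : K)) Z = restrictSupport K (stanleyExponents e Z) := by
  rw [stanleySpace, restrictSupport_eq_span]
  congr 1
  ext w
  simp only [monomial_mul, one_mul, Set.mem_ofPred_eq, Set.mem_image, stanleyExponents]
  constructor
  · rintro ⟨d, hd, rfl⟩
    refine ⟨e + d, ⟨le_self_add, fun i hi => ?_⟩, rfl⟩
    have : d i = 0 := Finsupp.notMem_support_iff.mp fun h => hi (hd h)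
    simp [this]
  · rintro ⟨c, ⟨hle, hZ⟩, rfl⟩
    refine ⟨c - e, fun i hi => ?_, by rw [add_tsub_cancel_of_le hle]⟩
    by_contra hiZ
    simp [hZ i hiZ] at hi

theorem stanleyExponents_univ {n : ℕ} (e : Fin n →₀ ℕ) :
    stanleyExponents e Finset.univ = Set.Ici e := by
  ext c
  simp [stanleyExponents]

theorem IsStanleyDecomp.exists_ne_univ {n s : ℕ} {I : Ideal (MvPolynomial (Fin n) K)}
    {u : Fin s → MvPolynomial (Fin n) K} {Z : Fin s → Finset (Fin n)}
    (hd : IsStanleyDecomp I u Z) {a b : Fin n →₀ ℕ} (ha : monomial a (1 : K) ∈ I)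
    (hb : monomial b (1 : K) ∈ I) (hab : monomial (a ⊓ b) (1 : K) ∉ I) :
    ∃ i, Z i ≠ Finset.univ := by
  by_contra! hZ
  obtain ⟨hmon, hindep, hsup⟩ := hd
  choose e he using hmon
  have hspace : ∀ i, stanleySpace (u i) (Z i) = restrictSupport K (Set.Ici (e i)) := by
    intro i
    rw [he i, hZ i, stanleySpace_monomial, stanleyExponents_univ]
  have hI : ∀ c, monomial c (1 : K) ∈ I ↔ ∃ i, e i ≤ c := by
    intro c
    rw [← Submodule.restrictScalars_mem K, ← hsup]
    simp [hspace, iSup_restrictSupport]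
  obtain ⟨i, hi⟩ := (hI a).mp ha
  obtain ⟨j, hj⟩ := (hI b).mp hb
  obtain rfl : i = j := by
    by_contra hij
    have hdisj := hindep.pairwiseDisjoint hij
    simp only [hspace] at hdisj
    exact Set.disjoint_left.mp (disjoint_of_disjoint_restrictSupport hdisj)
      (show e i ≤ a ⊔ b from le_sup_of_le_left hi)
      (show e j ≤ a ⊔ b from le_sup_of_le_right hj)
  exact hab ((hI _).mpr ⟨i, le_inf hi hj⟩)

theorem sdepth_eq_of_isStanleyDecomp {n s k : ℕ} {I : Ideal (MvPolynomial (Fin n) K)}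
    {u : Fin s → MvPolynomial (Fin n) K} {Z : Fin s → Finset (Fin n)}
    (hd : IsStanleyDecomp I u Z) (hk : ∀ i, k ≤ (Z i).card)
    (hle : ∀ (s : ℕ) (u : Fin s → MvPolynomial (Fin n) K) (Z : Fin s → Finset (Fin n)),
      IsStanleyDecomp I u Z → ∃ i, (Z i).card ≤ k) :
    sdepth I = k := by
  have hbound : k ∈ upperBounds {k | ∃ (s : ℕ) (u : Fin s → MvPolynomial (Fin n) K)
      (Z : Fin s → Finset (Fin n)), IsStanleyDecomp I u Z ∧ ∀ i, k ≤ (Z i).card} := by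
    rintro m ⟨s, u, Z, hd, hm⟩
    obtain ⟨i, hi⟩ := hle s u Z hd
    exact (hm i).trans hi
  exact le_antisymm (csSup_le' hbound) (le_csSup ⟨k, hbound⟩ ⟨s, u, Z, hd, hk⟩)

theorem restrictScalars_span_X01_inf_span_X23 :
    (Ideal.span {(X 0 : MvPolynomial (Fin 4) K), X 1} ⊓ Ideal.span {X 2, X 3}).restrictScalars K =
      restrictSupport K {c | (0 < c 0 ∨ 0 < c 1) ∧ (0 < c 2 ∨ 0 < c 3)} := by
  rw [Submodule.restrictScalars_inf, ← Set.image_pair, ← Set.image_pair,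
    restrictScalars_span_image_X, restrictScalars_span_image_X, ← restrictSupport_inter]
  congr 1
  ext c
  simp

theorem monomial_mem_span_X01_inf_span_X23_iff (c : Fin 4 →₀ ℕ) :
    monomial c (1 : K) ∈ Ideal.span {X 0, X 1} ⊓ Ideal.span {X 2, X 3} ↔
      (0 < c 0 ∨ 0 < c 1) ∧ (0 < c 2 ∨ 0 < c 3) := by
  rw [← Submodule.restrictScalars_mem K, restrictScalars_span_X01_inf_span_X23,
    monomial_mem_restrictSupport]
  simp

open Finsupp in
theorem isStanleyDecomp_span_X01_inf_span_X23 :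
    IsStanleyDecomp (Ideal.span {(X 0 : MvPolynomial (Fin 4) K), X 1} ⊓ Ideal.span {X 2, X 3})
      ![X 0 * X 2, X 0 * X 3, X 1 * X 2, X 1 * X 3, X 0 * X 1 * X 2 * X 3]
      ![{0, 2, 3}, {0, 1, 3}, {0, 1, 2}, {1, 2, 3}, {0, 1, 2, 3}] := by
  set e : Fin 5 → Fin 4 →₀ ℕ := ![single 0 1 + single 2 1, single 0 1 + single 3 1,
    single 1 1 + single 2 1, single 1 1 + single 3 1,
    single 0 1 + single 1 1 + single 2 1 + single 3 1]
  set Z : Fin 5 → Finset (Fin 4) := ![{0, 2, 3}, {0, 1, 3}, {0, 1, 2}, {1, 2, 3}, {0, 1, 2, 3}]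
  have hu : ![X 0 * X 2, X 0 * X 3, X 1 * X 2, X 1 * X 3, X 0 * X 1 * X 2 * X 3] =
      fun i => monomial (e i) (1 : K) := by
    ext1 i; fin_cases i <;> simp [e, X, monomial_mul]
  have hE : ∀ c i, c ∈ stanleyExponents (e i) (Z i) ↔
      ![1 ≤ c 0 ∧ c 1 = 0 ∧ 1 ≤ c 2, 1 ≤ c 0 ∧ c 2 = 0 ∧ 1 ≤ c 3,
        1 ≤ c 1 ∧ 1 ≤ c 2 ∧ c 3 = 0, c 0 = 0 ∧ 1 ≤ c 1 ∧ 1 ≤ c 3,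
        1 ≤ c 0 ∧ 1 ≤ c 1 ∧ 1 ≤ c 2 ∧ 1 ≤ c 3] i := by
    intro c i
    fin_cases i <;> simp [e, Z, mem_stanleyExponents_iff, Fin.forall_fin_succ, single_apply]
  refine ⟨fun i => ⟨e i, congrFun hu i⟩, ?_, ?_⟩
  · simp only [hu, stanleySpace_monomial]
    refine iSupIndep_restrictSupport fun i j hij => Set.disjoint_left.mpr fun c hi hj => ?_
    rw [hE] at hi hj
    fin_cases i <;> fin_cases j <;>
      simp only [Fin.zero_eta, Fin.mk_one, Fin.reduceFinMk, Matrix.cons_val_zero,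
        Matrix.cons_val_one, Matrix.cons_val, ne_eq, not_true_eq_false] at hi hj hij <;> omega
  · rw [restrictScalars_span_X01_inf_span_X23]
    simp only [hu, stanleySpace_monomial, iSup_restrictSupport]
    congr 1
    ext c
    simp only [Set.mem_iUnion, hE, Fin.exists_fin_succ, Matrix.cons_val_zero, Matrix.cons_val_succ,
      Matrix.cons_val_fin_one, exists_const, Set.mem_ofPred_eq]
    omega

/-- In `S = K[x_1,x_2,x_3,x_4]`, `sdepth((x_1,x_2) ∩ (x_3,x_4)) = 3`; in
particular `(x_1,x_2) ∩ (x_3,x_4) = x_1x_3K[x_1,x_3,x_4] ⊕ x_1x_4K[x_1,x_2,x_4] ⊕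
x_2x_3K[x_1,x_2,x_3] ⊕ x_2x_4K[x_2,x_3,x_4] ⊕ x_1x_2x_3x_4K[x_1,x_2,x_3,x_4]`
is a Stanley decomposition. -/
theorem sdepth_inter_two_two_eq_three :
    sdepth (Ideal.span {(X 0 : MvPolynomial (Fin 4) K), X 1} ⊓ Ideal.span {X 2, X 3}) = 3 ∧
    IsStanleyDecomp (Ideal.span {(X 0 : MvPolynomial (Fin 4) K), X 1} ⊓ Ideal.span {X 2, X 3})
      ![X 0 * X 2, X 0 * X 3, X 1 * X 2, X 1 * X 3, X 0 * X 1 * X 2 * X 3]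
      ![{0, 2, 3}, {0, 1, 3}, {0, 1, 2}, {1, 2, 3}, {0, 1, 2, 3}] := by
  have hdecomp := isStanleyDecomp_span_X01_inf_span_X23 (K := K)
  refine ⟨sdepth_eq_of_isStanleyDecomp hdecomp (by decide) fun s u Z hd => ?_, hdecomp⟩
  obtain ⟨i, hi⟩ := hd.exists_ne_univ
    (a := Finsupp.single 0 1 + Finsupp.single 2 1) (b := Finsupp.single 1 1 + Finsupp.single 3 1)
    ((monomial_mem_span_X01_inf_span_X23_iff _).mpr (by simp))
    ((monomial_mem_span_X01_inf_span_X23_iff _).mpr (by simp))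
    (by rw [monomial_mem_span_X01_inf_span_X23_iff]; simp)
  exact ⟨i, Nat.le_of_lt_succ ((Finset.card_lt_iff_ne_univ _).mpr hi)⟩
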